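/- arXiv:2302.05882 — 2 statements merged into one kernel-verified Lean document; each statement's English description precedes it below -/
import Mathlib

section
/- Let σ(x) = x² and (λ, λ*) ~ N(0, Ω) with E as above. Then the symmetric p×p matrix with entries E[(σ'(λ_i) λ_j + σ'(λ_j) λ_i) E] equals 4(Tr(P)/k − Tr(Q)/p) Q + 8(M Mᵀ/k − Q²/p), i.e. Ψ^{(GF)}(Ω) = 4(Tr(P)/k − Tr(Q)/p)Q + 8(M Mᵀ/k − Q²/p). -/
open MeasureTheory ProbabilityTheory Matrix Real
open scoped ENNReal NNReal

section GaussAux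

lemma integrable_pow_gauss (n : ℕ) :
    Integrable (fun x : ℝ => x ^ n * Real.exp (-(x ^ 2 / 2))) := by
  have h := integrable_rpow_mul_exp_neg_mul_sq (b := (1/2 : ℝ)) (by norm_num)
    (s := (n : ℝ)) (lt_of_lt_of_le (by norm_num) (Nat.cast_nonneg n))
  have : (fun x : ℝ => x ^ (n : ℝ) * Real.exp (-(1/2) * x ^ 2))
      = fun x : ℝ => x ^ n * Real.exp (-(x ^ 2 / 2)) := by
    funext x
    rw [Real.rpow_natCast]
    ring_nf
  rwa [this] at h

lemma gauss_G0 : ∫ x : ℝ, Real.exp (-(x ^ 2 / 2)) = Real.sqrt (2 * π) := by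
  have h := integral_gaussian (1/2)
  have : (fun x : ℝ => Real.exp (-(1/2) * x ^ 2))
      = fun x : ℝ => Real.exp (-(x ^ 2 / 2)) := by funext x; ring_nf
  rw [this] at h
  rw [h]
  rw [show (2:ℝ)*π = π/(1/2) by ring]

lemma gauss_G1 : ∫ x : ℝ, x ^ 1 * Real.exp (-(x ^ 2 / 2)) = 0 := by
  have hd : ∀ x : ℝ, HasDerivAt (fun y : ℝ => -Real.exp (-(y ^ 2 / 2)))
      (x ^ 1 * Real.exp (-(x ^ 2 / 2))) x := by
    intro x
    have h1 : HasDerivAt (fun y : ℝ => -(y ^ 2 / 2)) (-x) x := by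
      have := (hasDerivAt_pow 2 x).div_const 2
      exact this.neg.congr_deriv (by norm_num)
    have := h1.exp
    refine this.neg.congr_deriv ?_
    ring
  have := integral_eq_zero_of_hasDerivAt_of_integrable hd
    (by simpa using integrable_pow_gauss 1)
    ((by simpa using integrable_pow_gauss 0 : Integrable fun y : ℝ => Real.exp (-(y ^ 2 / 2))).neg)
  simpa using this

lemma gauss_Grec (n : ℕ) :
    ∫ x : ℝ, x ^ (n + 2) * Real.exp (-(x ^ 2 / 2))
      = (n + 1 : ℝ) * ∫ x : ℝ, x ^ n * Real.exp (-(x ^ 2 / 2)) := by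
  have hd : ∀ x : ℝ, HasDerivAt (fun y : ℝ => -(y ^ (n+1) * Real.exp (-(y ^ 2 / 2))))
      (x ^ (n + 2) * Real.exp (-(x ^ 2 / 2))
        - (n + 1 : ℝ) * (x ^ n * Real.exp (-(x ^ 2 / 2)))) x := by
    intro x
    have h1 : HasDerivAt (fun y : ℝ => -(y ^ 2 / 2)) (-x) x := by
      have := (hasDerivAt_pow 2 x).div_const 2
      exact this.neg.congr_deriv (by norm_num)
    have h2 : HasDerivAt (fun y : ℝ => Real.exp (-(y ^ 2 / 2)))
        (Real.exp (-(x ^ 2 / 2)) * (-x)) x := h1.exp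
    have h3 := (hasDerivAt_pow (n+1) x).mul h2
    refine h3.neg.congr_deriv ?_
    simp only [Nat.add_sub_cancel]
    push_cast
    ring
  have hint : Integrable (fun x : ℝ => x ^ (n + 2) * Real.exp (-(x ^ 2 / 2))
      - (n + 1 : ℝ) * (x ^ n * Real.exp (-(x ^ 2 / 2)))) :=
    (integrable_pow_gauss (n+2)).sub ((integrable_pow_gauss n).const_mul _)
  have h0 := integral_eq_zero_of_hasDerivAt_of_integrable hd hint
    ((integrable_pow_gauss (n+1)).neg)
  rw [integral_sub (integrable_pow_gauss (n+2))
    ((integrable_pow_gauss n).const_mul _), MeasureTheory.integral_const_mul] at h0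
  linarith

noncomputable def gmoment (n : ℕ) : ℝ := ∫ x, x ^ n ∂(gaussianReal 0 1)

lemma gaussianPDFReal_std (x : ℝ) :
    gaussianPDFReal 0 1 x = (Real.sqrt (2 * π))⁻¹ * Real.exp (-(x ^ 2 / 2)) := by
  simp [gaussianPDFReal]
  left; ring

lemma integral_gaussianReal_std (g : ℝ → ℝ) :
    ∫ x, g x ∂(gaussianReal 0 1)
      = ∫ x, gaussianPDFReal 0 1 x * g x := by
  rw [gaussianReal_of_var_ne_zero 0 one_ne_zero]
  have hmeas : Measurable (fun x => (gaussianPDFReal 0 1 x).toNNReal) :=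
    (measurable_gaussianPDFReal 0 1).real_toNNReal
  have hpdf : gaussianPDF 0 1 = fun x => ((gaussianPDFReal 0 1 x).toNNReal : ℝ≥0∞) := rfl
  rw [hpdf, integral_withDensity_eq_integral_smul hmeas]
  congr 1
  funext x
  simp [NNReal.smul_def, Real.coe_toNNReal _ (gaussianPDFReal_nonneg 0 1 x)]

lemma integrable_pow_gaussianReal (n : ℕ) :
    Integrable (fun x : ℝ => x ^ n) (gaussianReal 0 1) := by
  rw [gaussianReal_of_var_ne_zero 0 one_ne_zero]
  have hmeas : Measurable (fun x => (gaussianPDFReal 0 1 x).toNNReal) :=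
    (measurable_gaussianPDFReal 0 1).real_toNNReal
  have hpdf : gaussianPDF 0 1 = fun x => ((gaussianPDFReal 0 1 x).toNNReal : ℝ≥0∞) := rfl
  rw [hpdf, integrable_withDensity_iff_integrable_smul hmeas]
  have : (fun x : ℝ => (gaussianPDFReal 0 1 x).toNNReal • x ^ n)
      = fun x : ℝ => (Real.sqrt (2 * π))⁻¹ * (x ^ n * Real.exp (-(x ^ 2 / 2))) := by
    funext x
    rw [NNReal.smul_def, Real.coe_toNNReal _ (gaussianPDFReal_nonneg 0 1 x),
      smul_eq_mul, gaussianPDFReal_std]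
    ring
  rw [this]
  exact (integrable_pow_gauss n).const_mul _

lemma gmoment_eq (n : ℕ) :
    gmoment n = (Real.sqrt (2 * π))⁻¹ * ∫ x : ℝ, x ^ n * Real.exp (-(x ^ 2 / 2)) := by
  rw [gmoment, integral_gaussianReal_std]
  rw [← MeasureTheory.integral_const_mul]
  congr 1; funext x; rw [gaussianPDFReal_std]; ring

lemma sqrt_two_pi_pos : (0:ℝ) < Real.sqrt (2 * π) :=
  Real.sqrt_pos.2 (by positivity)

lemma gmoment_zero : gmoment 0 = 1 := by
  have := gmoment_eq 0
  simp only [pow_zero, one_mul] at this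
  rw [this, gauss_G0, inv_mul_cancel₀ (ne_of_gt sqrt_two_pi_pos)]

lemma gmoment_one : gmoment 1 = 0 := by rw [gmoment_eq, gauss_G1, mul_zero]

lemma gmoment_two : gmoment 2 = 1 := by
  have h := gauss_Grec 0
  simp only [pow_zero, one_mul, Nat.cast_zero, zero_add] at h
  rw [gmoment_eq]
  rw [show (2:ℕ) = 0 + 2 from rfl, gauss_Grec 0]
  simp only [Nat.cast_zero, zero_add, one_mul, pow_zero]
  rw [gauss_G0, inv_mul_cancel₀ (ne_of_gt sqrt_two_pi_pos)]

lemma gmoment_three : gmoment 3 = 0 := by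
  rw [gmoment_eq, show (3:ℕ) = 1 + 2 from rfl, gauss_Grec 1, gauss_G1]
  ring

lemma gmoment_four : gmoment 4 = 3 := by
  rw [gmoment_eq, show (4:ℕ) = 2 + 2 from rfl, gauss_Grec 2,
    show ∫ x : ℝ, x ^ 2 * Real.exp (-(x ^ 2 / 2)) = _ from gauss_Grec 0]
  simp only [Nat.cast_zero, Nat.cast_ofNat, zero_add, one_mul, pow_zero]
  rw [gauss_G0]
  rw [inv_mul_eq_div]
  field_simp
  ring

end GaussAux

section Pi
variable {ι : Type*} [Fintype ι] [DecidableEq ι]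
local notation "π'" => (Measure.pi fun _ : ι => gaussianReal 0 1)

lemma integral_pi_prod (f : ι → ℝ → ℝ) :
    ∫ z, ∏ i, f i (z i) ∂π' = ∏ i, ∫ x, f i x ∂(gaussianReal 0 1) := by
  letI : MeasureSpace ℝ := ⟨gaussianReal 0 1⟩
  haveI : SigmaFinite (volume : Measure ℝ) :=
    inferInstanceAs (SigmaFinite (gaussianReal 0 1))
  exact integral_fintype_prod_eq_prod f

lemma integrable_pi_prod (f : ι → ℝ → ℝ)
    (hf : ∀ i, Integrable (f i) (gaussianReal 0 1)) :
    Integrable (fun z : ι → ℝ => ∏ i, f i (z i)) π' := by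
  letI : MeasureSpace ℝ := ⟨gaussianReal 0 1⟩
  haveI : SigmaFinite (volume : Measure ℝ) :=
    inferInstanceAs (SigmaFinite (gaussianReal 0 1))
  exact Integrable.fintype_prod hf

/-- count of occurrences of `e` among `a,b,c,d` -/
def cnt (a b c d e : ι) : ℕ :=
  (if a = e then 1 else 0) + (if b = e then 1 else 0)
    + (if c = e then 1 else 0) + (if d = e then 1 else 0)

lemma monomial_eq_prod (a b c d : ι) (z : ι → ℝ) :
    z a * z b * z c * z d = ∏ e, (z e) ^ (cnt a b c d e) := by
  simp only [cnt, pow_add, Finset.prod_mul_distrib]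
  have h : ∀ u : ι, (∏ e, (z e) ^ (if u = e then 1 else 0)) = z u := by
    intro u
    rw [show (fun e => (z e) ^ (if u = e then 1 else 0))
        = fun e => (if u = e then z e else 1) by funext e; split <;> simp]
    rw [Finset.prod_ite_eq]
    simp
  rw [h a, h b, h c, h d]

lemma integral_monomial (a b c d : ι) :
    ∫ z, z a * z b * z c * z d ∂π' = ∏ e, gmoment (cnt a b c d e) := by
  calc ∫ z, z a * z b * z c * z d ∂π'
      = ∫ z, ∏ e, (z e) ^ (cnt a b c d e) ∂π' := by
        congr 1; funext z; exact monomial_eq_prod a b c d z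
    _ = ∏ e, ∫ x, x ^ (cnt a b c d e) ∂(gaussianReal 0 1) :=
        integral_pi_prod _
    _ = ∏ e, gmoment (cnt a b c d e) := rfl

lemma integrable_monomial (a b c d : ι) :
    Integrable (fun z : ι → ℝ => z a * z b * z c * z d) π' := by
  have h := integrable_pi_prod (fun e x => x ^ (cnt a b c d e))
    (fun e => integrable_pow_gaussianReal _)
  exact h.congr (Filter.Eventually.of_forall fun z => (monomial_eq_prod a b c d z).symm)

lemma prod_cnt_eq_one (a b c d : ι)
    (h : ∀ e, cnt a b c d e = 0 ∨ cnt a b c d e = 2) :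
    ∏ e, gmoment (cnt a b c d e) = 1 :=
  Finset.prod_eq_one fun e _ => by
    rcases h e with h | h <;> rw [h]
    · exact gmoment_zero
    · exact gmoment_two

lemma prod_cnt_eq_zero (a b c d e₀ : ι)
    (h : cnt a b c d e₀ = 1 ∨ cnt a b c d e₀ = 3) :
    ∏ e, gmoment (cnt a b c d e) = 0 :=
  Finset.prod_eq_zero (Finset.mem_univ e₀) (by
    rcases h with h | h <;> rw [h]
    · exact gmoment_one
    · exact gmoment_three)

lemma prod_cnt_all_eq (a : ι) : ∏ e, gmoment (cnt a a a a e) = 3 := by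
  have h0 : ∀ e ∈ Finset.univ, e ≠ a → gmoment (cnt a a a a e) = 1 := by
    intro e _ he
    have hc : cnt a a a a e = 0 := by unfold cnt; simp [Ne.symm he]
    rw [hc]; exact gmoment_zero
  rw [Finset.prod_eq_single a h0 (fun h => absurd (Finset.mem_univ a) h)]
  have hc : cnt a a a a a = 4 := by unfold cnt; simp
  rw [hc]; exact gmoment_four

lemma prod_cnt_eq_zero₁ (a b c d : ι)
    (h : cnt a b c d a = 1 ∨ cnt a b c d a = 3) :
    ∏ e, gmoment (cnt a b c d e) = 0 := prod_cnt_eq_zero a b c d a h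
lemma prod_cnt_eq_zero₂ (a b c d : ι)
    (h : cnt a b c d b = 1 ∨ cnt a b c d b = 3) :
    ∏ e, gmoment (cnt a b c d e) = 0 := prod_cnt_eq_zero a b c d b h
lemma prod_cnt_eq_zero₃ (a b c d : ι)
    (h : cnt a b c d c = 1 ∨ cnt a b c d c = 3) :
    ∏ e, gmoment (cnt a b c d e) = 0 := prod_cnt_eq_zero a b c d c h
lemma prod_cnt_eq_zero₄ (a b c d : ι)
    (h : cnt a b c d d = 1 ∨ cnt a b c d d = 3) :
    ∏ e, gmoment (cnt a b c d e) = 0 := prod_cnt_eq_zero a b c d d h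

lemma isserlis (a b c d : ι) :
    ∫ z, z a * z b * z c * z d ∂π'
      = (if a = b then (1:ℝ) else 0) * (if c = d then 1 else 0)
        + (if a = c then (1:ℝ) else 0) * (if b = d then 1 else 0)
        + (if a = d then (1:ℝ) else 0) * (if b = c then 1 else 0) := by
  rw [integral_monomial]
  by_cases hab : a = b <;> by_cases hac : a = c <;> by_cases had : a = d <;>
    by_cases hbc : b = c <;> by_cases hbd : b = d <;> by_cases hcd : c = d <;>
    subst_vars <;>
    first
      | (simp_all; done)
      | ((rw [prod_cnt_all_eq]; norm_num); done)
      | ((rw [prod_cnt_eq_one] <;>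
          first
            | (simp_all; done)
            | (intro e; unfold cnt; split_ifs <;> first | omega | simp_all)); done)
      | ((rw [prod_cnt_eq_zero₁] <;>
          first
            | (simp_all; done)
            | (unfold cnt; split_ifs <;> first | omega | simp_all)); done)
      | ((rw [prod_cnt_eq_zero₂] <;>
          first
            | (simp_all; done)
            | (unfold cnt; split_ifs <;> first | omega | simp_all)); done)
      | ((rw [prod_cnt_eq_zero₃] <;>
          first
            | (simp_all; done)
            | (unfold cnt; split_ifs <;> first | omega | simp_all)); done)
      | ((rw [prod_cnt_eq_zero₄] <;>
          first
            | (simp_all; done)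
            | (unfold cnt; split_ifs <;> first | omega | simp_all)); done)

lemma quad_expand (f g h m : ι → ℝ) (z : ι → ℝ) :
    (∑ a, f a * z a) * (∑ b, g b * z b) * (∑ c, h c * z c) * (∑ d, m d * z d)
      = ∑ d, ∑ c, ∑ b, ∑ a, (f a * g b * h c * m d) * (z a * z b * z c * z d) := by
  simp only [Finset.sum_mul, Finset.mul_sum]
  refine Finset.sum_congr rfl fun d _ => Finset.sum_congr rfl fun c _ =>
    Finset.sum_congr rfl fun b _ => Finset.sum_congr rfl fun a _ => by ring

lemma integrable_quad (f g h m : ι → ℝ) :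
    Integrable (fun z : ι → ℝ =>
      (∑ a, f a * z a) * (∑ b, g b * z b) * (∑ c, h c * z c) * (∑ d, m d * z d)) π' := by
  have : Integrable (fun z : ι → ℝ =>
      ∑ d, ∑ c, ∑ b, ∑ a, (f a * g b * h c * m d) * (z a * z b * z c * z d)) π' :=
    integrable_finset_sum _ fun d _ => integrable_finset_sum _ fun c _ =>
      integrable_finset_sum _ fun b _ => integrable_finset_sum _ fun a _ =>
        (integrable_monomial a b c d).const_mul _
  exact this.congr (Filter.Eventually.of_forall fun z => (quad_expand f g h m z).symm)

lemma integral_quad (f g h m : ι → ℝ) :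
    ∫ z, (∑ a, f a * z a) * (∑ b, g b * z b) * (∑ c, h c * z c) * (∑ d, m d * z d) ∂π'
      = (∑ a, f a * g a) * (∑ a, h a * m a)
        + (∑ a, f a * h a) * (∑ a, g a * m a)
        + (∑ a, f a * m a) * (∑ a, g a * h a) := by
  calc ∫ z, (∑ a, f a * z a) * (∑ b, g b * z b) * (∑ c, h c * z c) * (∑ d, m d * z d) ∂π'
      = ∫ z, ∑ d, ∑ c, ∑ b, ∑ a,
          (f a * g b * h c * m d) * (z a * z b * z c * z d) ∂π' :=
        integral_congr_ae (Filter.Eventually.of_forall fun z => quad_expand f g h m z)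
    _ = ∑ d, ∑ c, ∑ b, ∑ a, (f a * g b * h c * m d) *
          ((if a = b then (1:ℝ) else 0) * (if c = d then 1 else 0)
            + (if a = c then (1:ℝ) else 0) * (if b = d then 1 else 0)
            + (if a = d then (1:ℝ) else 0) * (if b = c then 1 else 0)) := by
        rw [integral_finset_sum _ fun d _ => integrable_finset_sum _ fun c _ =>
          integrable_finset_sum _ fun b _ => integrable_finset_sum _ fun a _ =>
            (integrable_monomial a b c d).const_mul _]
        refine Finset.sum_congr rfl fun d _ => ?_
        rw [integral_finset_sum _ fun c _ => integrable_finset_sum _ fun b _ =>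
          integrable_finset_sum _ fun a _ => (integrable_monomial a b c d).const_mul _]
        refine Finset.sum_congr rfl fun c _ => ?_
        rw [integral_finset_sum _ fun b _ => integrable_finset_sum _ fun a _ =>
          (integrable_monomial a b c d).const_mul _]
        refine Finset.sum_congr rfl fun b _ => ?_
        rw [integral_finset_sum _ fun a _ => (integrable_monomial a b c d).const_mul _]
        refine Finset.sum_congr rfl fun a _ => ?_
        rw [MeasureTheory.integral_const_mul, isserlis]
    _ = (∑ a, f a * g a) * (∑ a, h a * m a)
        + (∑ a, f a * h a) * (∑ a, g a * m a)
        + (∑ a, f a * m a) * (∑ a, g a * h a) := by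
        simp only [mul_add, mul_ite, ite_mul, mul_one, mul_zero, zero_mul, one_mul,
          Finset.sum_add_distrib, Finset.sum_ite_eq, Finset.sum_ite_eq',
          Finset.sum_ite_irrel, Finset.sum_const_zero,
          Finset.mem_univ, if_true]
        refine congrArg₂ (·+·) (congrArg₂ (·+·) ?_ ?_) ?_
        · rw [Finset.sum_mul_sum, Finset.sum_comm]
          exact Finset.sum_congr rfl fun i _ => Finset.sum_congr rfl fun j _ => by ring
        · rw [Finset.sum_mul_sum, Finset.sum_comm]
          exact Finset.sum_congr rfl fun i _ => Finset.sum_congr rfl fun j _ => by ring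
        · rw [Finset.sum_mul_sum]
          exact Finset.sum_congr rfl fun i _ => Finset.sum_congr rfl fun j _ => by ring

end Pi

/-- For the square activation (`σ'(x) = 2x`) and `(λ, λ*) ~ N(0, Ω)` with
`Ω = [[Q, M],[Mᵀ, P]]` and `E = (1/k) Σ_r (λ*_r)² − (1/p) Σ_j λ_j²`, one has, entrywise,
`E[(σ'(λ_i) λ_j + σ'(λ_j) λ_i) E] = 4(Tr(P)/k − Tr(Q)/p) Q_{ij} + 8([M Mᵀ]_{ij}/k − [Q²]_{ij}/p)`,
i.e. `Ψ^{(GF)}(Ω) = 4(Tr(P)/k − Tr(Q)/p) Q + 8(M Mᵀ/k − Q²/p)`. -/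
theorem squared_activation_PsiGF_formula
    {p k : ℕ} (hp : 0 < p) (hk : 0 < k)
    (Q : Matrix (Fin p) (Fin p) ℝ) (M : Matrix (Fin p) (Fin k) ℝ)
    (P : Matrix (Fin k) (Fin k) ℝ)
    (A : Matrix (Fin p ⊕ Fin k) (Fin p ⊕ Fin k) ℝ)
    (hA : A * Aᵀ = Matrix.fromBlocks Q M Mᵀ P)
    (μ : Measure (Fin p ⊕ Fin k → ℝ))
    (hμ : μ = (Measure.pi fun _ : Fin p ⊕ Fin k => gaussianReal 0 1).map A.mulVec)
    (E : (Fin p ⊕ Fin k → ℝ) → ℝ)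
    (hE : ∀ v, E v = (k : ℝ)⁻¹ * ∑ r, (v (Sum.inr r)) ^ 2
        - (p : ℝ)⁻¹ * ∑ j, (v (Sum.inl j)) ^ 2) :
    ∀ (i j : Fin p),
      ∫ v, (2 * v (Sum.inl i) * v (Sum.inl j) + 2 * v (Sum.inl j) * v (Sum.inl i)) * E v ∂μ
        = 4 * (P.trace / k - Q.trace / p) * Q i j
          + 8 * ((M * Mᵀ) i j / k - (Q * Q) i j / p) := by
  intro i j
  subst hμ
  simp only [hE]
  -- measurability of A.mulVec
  have hmv : Measurable (A.mulVec : ((Fin p ⊕ Fin k) → ℝ) → ((Fin p ⊕ Fin k) → ℝ)) := by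
    apply measurable_pi_lambda
    intro u
    have h : (fun z : (Fin p ⊕ Fin k) → ℝ => A.mulVec z u) = fun z => ∑ a, A u a * z a := rfl
    rw [h]
    exact Finset.measurable_sum _ fun a _ => (measurable_pi_apply a).const_mul _
  have hfmeas : Measurable (fun v : (Fin p ⊕ Fin k) → ℝ =>
      (2 * v (Sum.inl i) * v (Sum.inl j) + 2 * v (Sum.inl j) * v (Sum.inl i)) *
        ((k : ℝ)⁻¹ * ∑ r, (v (Sum.inr r)) ^ 2
          - (p : ℝ)⁻¹ * ∑ l, (v (Sum.inl l)) ^ 2)) := by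
    have h1 : Measurable fun v : (Fin p ⊕ Fin k) → ℝ => ∑ r : Fin k, (v (Sum.inr r)) ^ 2 :=
      Finset.measurable_sum _ fun r _ => (measurable_pi_apply (Sum.inr r)).pow_const 2
    have h2 : Measurable fun v : (Fin p ⊕ Fin k) → ℝ => ∑ l : Fin p, (v (Sum.inl l)) ^ 2 :=
      Finset.measurable_sum _ fun l _ => (measurable_pi_apply (Sum.inl l)).pow_const 2
    have h3 : Measurable fun v : (Fin p ⊕ Fin k) → ℝ =>
        2 * v (Sum.inl i) * v (Sum.inl j) + 2 * v (Sum.inl j) * v (Sum.inl i) :=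
      (((measurable_pi_apply (Sum.inl i)).const_mul 2).mul
          (measurable_pi_apply (Sum.inl j))).add
        (((measurable_pi_apply (Sum.inl j)).const_mul 2).mul
          (measurable_pi_apply (Sum.inl i)))
    exact h3.mul ((h1.const_mul _).sub (h2.const_mul _))
  rw [integral_map hmv.aemeasurable hfmeas.aestronglyMeasurable]
  -- pointwise rewrite
  have hmvs : ∀ (z : (Fin p ⊕ Fin k) → ℝ) (u : Fin p ⊕ Fin k), A.mulVec z u = ∑ a, A u a * z a := fun z u => rfl
  have hpoint : ∀ z : (Fin p ⊕ Fin k) → ℝ,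
      (2 * A.mulVec z (Sum.inl i) * A.mulVec z (Sum.inl j)
        + 2 * A.mulVec z (Sum.inl j) * A.mulVec z (Sum.inl i)) *
        ((k : ℝ)⁻¹ * ∑ r, (A.mulVec z (Sum.inr r)) ^ 2
          - (p : ℝ)⁻¹ * ∑ l, (A.mulVec z (Sum.inl l)) ^ 2)
      = (k : ℝ)⁻¹ * ∑ r, 4 *
          ((∑ a, A (Sum.inl i) a * z a) * (∑ a, A (Sum.inl j) a * z a)
            * (∑ a, A (Sum.inr r) a * z a) * (∑ a, A (Sum.inr r) a * z a))
        - (p : ℝ)⁻¹ * ∑ l, 4 *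
          ((∑ a, A (Sum.inl i) a * z a) * (∑ a, A (Sum.inl j) a * z a)
            * (∑ a, A (Sum.inl l) a * z a) * (∑ a, A (Sum.inl l) a * z a)) := by
    intro z
    simp only [hmvs]
    rw [mul_sub]
    congr 1
    · rw [mul_left_comm, Finset.mul_sum]
      congr 1
      exact Finset.sum_congr rfl fun r _ => by ring
    · rw [mul_left_comm, Finset.mul_sum]
      congr 1
      exact Finset.sum_congr rfl fun l _ => by ring
  rw [integral_congr_ae (Filter.Eventually.of_forall hpoint)]
  have hint1 : Integrable (fun z : (Fin p ⊕ Fin k) → ℝ => (k : ℝ)⁻¹ * ∑ r, 4 *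
      ((∑ a, A (Sum.inl i) a * z a) * (∑ a, A (Sum.inl j) a * z a)
        * (∑ a, A (Sum.inr r) a * z a) * (∑ a, A (Sum.inr r) a * z a)))
      (Measure.pi fun _ : Fin p ⊕ Fin k => gaussianReal 0 1) :=
    (integrable_finset_sum _ fun r _ =>
      (integrable_quad _ _ _ _).const_mul 4).const_mul _
  have hint2 : Integrable (fun z : (Fin p ⊕ Fin k) → ℝ => (p : ℝ)⁻¹ * ∑ l, 4 *
      ((∑ a, A (Sum.inl i) a * z a) * (∑ a, A (Sum.inl j) a * z a)
        * (∑ a, A (Sum.inl l) a * z a) * (∑ a, A (Sum.inl l) a * z a)))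
      (Measure.pi fun _ : Fin p ⊕ Fin k => gaussianReal 0 1) :=
    (integrable_finset_sum _ fun l _ =>
      (integrable_quad _ _ _ _).const_mul 4).const_mul _
  rw [integral_sub hint1 hint2, MeasureTheory.integral_const_mul,
    MeasureTheory.integral_const_mul,
    integral_finset_sum _ (fun r _ => (integrable_quad _ _ _ _).const_mul 4),
    integral_finset_sum _ (fun l _ => (integrable_quad _ _ _ _).const_mul 4)]
  simp only [MeasureTheory.integral_const_mul, integral_quad]
  -- covariance identification
  have hcov : ∀ u v : Fin p ⊕ Fin k, (∑ a, A u a * A v a) = Matrix.fromBlocks Q M Mᵀ P u v := by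
    intro u v
    rw [← hA]
    simp [Matrix.mul_apply, Matrix.transpose_apply]
  have hQ : ∀ i' j' : Fin p, (∑ a, A (Sum.inl i') a * A (Sum.inl j') a) = Q i' j' := by
    intro i' j'; rw [hcov]; rfl
  have hM : ∀ (i' : Fin p) (r : Fin k),
      (∑ a, A (Sum.inl i') a * A (Sum.inr r) a) = M i' r := by
    intro i' r; rw [hcov]; rfl
  have hP : ∀ r s : Fin k, (∑ a, A (Sum.inr r) a * A (Sum.inr s) a) = P r s := by
    intro r s; rw [hcov]; rfl
  have hQsym : ∀ x y : Fin p, Q x y = Q y x := by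
    intro x y
    rw [← hQ x y, ← hQ y x]
    exact Finset.sum_congr rfl fun a _ => mul_comm _ _
  simp only [hQ, hM, hP]
  have hsum1 : ∑ r : Fin k, 4 * (Q i j * P r r + M i r * M j r + M i r * M j r)
      = 4 * Q i j * P.trace + 8 * (M * Mᵀ) i j := by
    simp only [Matrix.trace, Matrix.diag, Matrix.mul_apply, Matrix.transpose_apply]
    rw [Finset.mul_sum, Finset.mul_sum, ← Finset.sum_add_distrib]
    exact Finset.sum_congr rfl fun r _ => by ring
  have hsum2 : ∑ l : Fin p, 4 * (Q i j * Q l l + Q i l * Q j l + Q i l * Q j l)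
      = 4 * Q i j * Q.trace + 8 * (Q * Q) i j := by
    simp only [Matrix.trace, Matrix.diag, Matrix.mul_apply]
    rw [Finset.mul_sum, Finset.mul_sum, ← Finset.sum_add_distrib]
    refine Finset.sum_congr rfl fun l _ => ?_
    rw [hQsym j l]
    ring
  rw [hsum1, hsum2]
  have hkne : (k : ℝ) ≠ 0 := Nat.cast_ne_zero.mpr hk.ne'
  have hpne : (p : ℝ) ≠ 0 := Nat.cast_ne_zero.mpr hp.ne'
  field_simp
  ring
end

section
/- Let σ(x) = x², p ≥ 2, and let Ω̃ be the random overlap matrix with Q̃ = M P⁻¹ Mᵀ + D_{√q} Ξ D_{√q}, where Ξ has unit diagonal and independent off-diagonal entries distributed as ⟨g, g'⟩ for independent uniform g, g' on S^{d−k−1}. Then E_Ξ[R(Ω̃)] = R(Ω̄) + (1/p²) · (Σ_{i≠j} q_i q_j)/(d−k), where Ω̄ is obtained by replacing Ξ with the identity matrix and R(Ω) = (Tr(P)² + 2Tr(P²))/(2k²) − (Tr(P)Tr(Q) + 2Tr(MMᵀ))/(pk) + (Tr(Q)² + 2Tr(Q²))/(2p²) + Δ/2. -/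
/-!
Write `Q̃ = Q̄ + D (Ξ - 1) D` with `D = D_{√q}`. The perturbation `D (Ξ - 1) D` has zero diagonal,
so `Tr Q̃ = Tr Q̄` is deterministic and `R(Q̃) - R(Q̄) = (Tr Q̃² - Tr Q̄²) / p²`. Expanding
`Tr Q̃² = Σᵢⱼ Q̃ᵢⱼ Q̃ⱼᵢ` entrywise, the terms linear in the centred entries `Ξᵢⱼ` average to
zero and the quadratic ones contribute `Σ_{i≠j} qᵢ qⱼ E[Ξᵢⱼ²] = Σ_{i≠j} qᵢ qⱼ / (d - k)`.
-/

open MeasureTheory Matrix Finset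

namespace Matrix

variable {n : Type*}

section

variable [DecidableEq n]

theorem sub_one_apply_of_ne (X : Matrix n n ℝ) {i j : n} (hij : i ≠ j) : (X - 1) i j = X i j := by
  rw [Matrix.sub_apply, one_apply_ne hij, sub_zero]

theorem sub_one_apply_comm {X : Matrix n n ℝ} (hX : ∀ i j, X i j = X j i) (i j : n) :
    (X - 1) i j = (X - 1) j i := by
  rcases eq_or_ne i j with rfl | hij
  · rfl
  · rw [sub_one_apply_of_ne _ hij, sub_one_apply_of_ne _ hij.symm, hX]

end

theorem trace_mul_self_eq_sum [Fintype n] (X : Matrix n n ℝ) :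
    (X * X).trace = ∑ i, ∑ j, X i j * X j i := by
  simp only [trace, diag_apply, mul_apply]

variable [Fintype n] [DecidableEq n]

theorem diagonal_mul_mul_diagonal_apply (s : n → ℝ) (X : Matrix n n ℝ) (i j : n) :
    (diagonal s * X * diagonal s) i j = s i * s j * X i j := by
  rw [mul_diagonal, diagonal_mul]
  ring

theorem add_diagonal_mul_mul_diagonal_eq_add_sub_one (A X : Matrix n n ℝ) (s : n → ℝ) :
    A + diagonal s * X * diagonal s
      = A + diagonal (fun i => s i ^ 2) + diagonal s * (X - 1) * diagonal s := by
  simp only [mul_sub, sub_mul, mul_one, diagonal_mul_diagonal, sq]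
  abel

theorem trace_add_diagonal_mul_mul_diagonal {X : Matrix n n ℝ} (hX : ∀ i, X i i = 0)
    (B : Matrix n n ℝ) (s : n → ℝ) : (B + diagonal s * X * diagonal s).trace = B.trace := by
  simp only [trace, diag_apply, add_apply, diagonal_mul_mul_diagonal_apply, hX, mul_zero,
    add_zero]

theorem trace_add_diagonal_mul_mul_diagonal_of_diag_eq_one {X : Matrix n n ℝ}
    (hX : ∀ i, X i i = 1) (A : Matrix n n ℝ) (s : n → ℝ) :
    (A + diagonal s * X * diagonal s).trace = (A + diagonal (fun i => s i ^ 2)).trace := by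
  rw [add_diagonal_mul_mul_diagonal_eq_add_sub_one]
  exact trace_add_diagonal_mul_mul_diagonal (by simp [hX]) _ _

theorem add_diagonal_mul_mul_diagonal_apply_mul_apply {X : Matrix n n ℝ} {i j : n}
    (hX : X i j = X j i) (B : Matrix n n ℝ) (s : n → ℝ) :
    (B + diagonal s * X * diagonal s) i j * (B + diagonal s * X * diagonal s) j i
      = B i j * B j i + s i * s j * (B i j + B j i) * X i j + (s i * s j) ^ 2 * X i j ^ 2 := by
  simp only [add_apply, diagonal_mul_mul_diagonal_apply, ← hX]
  ring

end Matrix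

section RandomPerturbation

variable {n Ω : Type*} [DecidableEq n] [MeasurableSpace Ω] {μ : Measure Ω}
  [IsProbabilityMeasure μ] {E X : Ω → Matrix n n ℝ}

theorem memLp_sub_one_apply (hX : ∀ i j, MemLp (fun ω => X ω i j) 2 μ) (i j : n) :
    MemLp (fun ω => (X ω - 1) i j) 2 μ :=
  (hX i j).sub (memLp_const _)

variable [Fintype n]

theorem integrable_add_diagonal_mul_mul_diagonal_apply_mul_apply
    (hE : ∀ i j, MemLp (fun ω => E ω i j) 2 μ) (hsymm : ∀ ω i j, E ω i j = E ω j i)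
    (B : Matrix n n ℝ) (s : n → ℝ) (i j : n) :
    Integrable (fun ω => (B + diagonal s * E ω * diagonal s) i j *
      (B + diagonal s * E ω * diagonal s) j i) μ := by
  simp only [add_diagonal_mul_mul_diagonal_apply_mul_apply (hsymm _ _ _)]
  exact ((integrable_const _).add (((hE i j).integrable one_le_two).const_mul _)).add
    ((hE i j).integrable_sq.const_mul _)

theorem integrable_trace_mul_self_add_diagonal_mul_mul_diagonal
    (hE : ∀ i j, MemLp (fun ω => E ω i j) 2 μ) (hsymm : ∀ ω i j, E ω i j = E ω j i)
    (B : Matrix n n ℝ) (s : n → ℝ) :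
    Integrable (fun ω => ((B + diagonal s * E ω * diagonal s) *
      (B + diagonal s * E ω * diagonal s)).trace) μ := by
  simp only [trace_mul_self_eq_sum]
  exact integrable_finsetSum _ fun i _ => integrable_finsetSum _ fun j _ =>
    integrable_add_diagonal_mul_mul_diagonal_apply_mul_apply hE hsymm B s i j

theorem integral_add_diagonal_mul_mul_diagonal_apply_mul_apply
    (hE : ∀ i j, MemLp (fun ω => E ω i j) 2 μ) (hsymm : ∀ ω i j, E ω i j = E ω j i)
    (hmean : ∀ i j, ∫ ω, E ω i j ∂μ = 0) (B : Matrix n n ℝ) (s : n → ℝ) (i j : n) :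
    ∫ ω, (B + diagonal s * E ω * diagonal s) i j * (B + diagonal s * E ω * diagonal s) j i ∂μ
      = B i j * B j i + (s i * s j) ^ 2 * ∫ ω, E ω i j ^ 2 ∂μ := by
  simp only [add_diagonal_mul_mul_diagonal_apply_mul_apply (hsymm _ _ _)]
  have hlin : Integrable (fun ω => B i j * B j i + s i * s j * (B i j + B j i) * E ω i j) μ :=
    (integrable_const _).add (((hE i j).integrable one_le_two).const_mul _)
  rw [integral_add hlin ((hE i j).integrable_sq.const_mul _),
    integral_add (integrable_const _) (((hE i j).integrable one_le_two).const_mul _),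
    integral_const]
  simp only [integral_const_mul, hmean, probReal_univ, one_smul, mul_zero, add_zero]

theorem integral_trace_mul_self_add_diagonal_mul_mul_diagonal
    (hE : ∀ i j, MemLp (fun ω => E ω i j) 2 μ) (hsymm : ∀ ω i j, E ω i j = E ω j i)
    (hdiag : ∀ ω i, E ω i i = 0) (hmean : ∀ i j, i ≠ j → ∫ ω, E ω i j ∂μ = 0)
    {v : ℝ} (hvar : ∀ i j, i ≠ j → ∫ ω, E ω i j ^ 2 ∂μ = v) (B : Matrix n n ℝ) (s : n → ℝ) :
    ∫ ω, ((B + diagonal s * E ω * diagonal s) * (B + diagonal s * E ω * diagonal s)).trace ∂μ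
      = (B * B).trace + v * ∑ i, ∑ j ∈ univ.erase i, s i ^ 2 * s j ^ 2 := by
  have hmean' : ∀ i j, ∫ ω, E ω i j ∂μ = 0 := fun i j => by
    rcases eq_or_ne i j with rfl | hij
    · simp [hdiag]
    · exact hmean i j hij
  have hoff : ∀ i, ∑ j, (s i * s j) ^ 2 * ∫ ω, E ω i j ^ 2 ∂μ
      = v * ∑ j ∈ univ.erase i, s i ^ 2 * s j ^ 2 := fun i => by
    rw [← sum_erase (a := i) _ (by simp [hdiag]), mul_sum]
    refine sum_congr rfl fun j hj => ?_
    rw [hvar i j (ne_of_mem_erase hj).symm]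
    ring
  simp only [trace_mul_self_eq_sum]
  rw [integral_finsetSum _ fun i _ => integrable_finsetSum _ fun j _ =>
    integrable_add_diagonal_mul_mul_diagonal_apply_mul_apply hE hsymm B s i j]
  simp only [integral_finsetSum _ fun j _ =>
    integrable_add_diagonal_mul_mul_diagonal_apply_mul_apply hE hsymm B s _ j,
    integral_add_diagonal_mul_mul_diagonal_apply_mul_apply hE hsymm hmean', sum_add_distrib,
    hoff, mul_sum]

theorem integrable_trace_mul_self_add_diagonal_mul_mul_diagonal_of_diag_eq_one
    (hX : ∀ i j, MemLp (fun ω => X ω i j) 2 μ) (hsymm : ∀ ω i j, X ω i j = X ω j i)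
    (A : Matrix n n ℝ) (s : n → ℝ) :
    Integrable (fun ω => ((A + diagonal s * X ω * diagonal s) *
      (A + diagonal s * X ω * diagonal s)).trace) μ := by
  simp only [add_diagonal_mul_mul_diagonal_eq_add_sub_one A]
  exact integrable_trace_mul_self_add_diagonal_mul_mul_diagonal (memLp_sub_one_apply hX)
    (fun ω => sub_one_apply_comm (hsymm ω)) _ s

theorem integral_trace_mul_self_add_diagonal_mul_mul_diagonal_of_diag_eq_one
    (hX : ∀ i j, MemLp (fun ω => X ω i j) 2 μ) (hsymm : ∀ ω i j, X ω i j = X ω j i)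
    (hdiag : ∀ ω i, X ω i i = 1) (hmean : ∀ i j, i ≠ j → ∫ ω, X ω i j ∂μ = 0)
    {v : ℝ} (hvar : ∀ i j, i ≠ j → ∫ ω, X ω i j ^ 2 ∂μ = v) (A : Matrix n n ℝ) (s : n → ℝ) :
    ∫ ω, ((A + diagonal s * X ω * diagonal s) * (A + diagonal s * X ω * diagonal s)).trace ∂μ
      = ((A + diagonal fun i => s i ^ 2) * (A + diagonal fun i => s i ^ 2)).trace
        + v * ∑ i, ∑ j ∈ univ.erase i, s i ^ 2 * s j ^ 2 := by
  simp only [add_diagonal_mul_mul_diagonal_eq_add_sub_one A]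
  refine integral_trace_mul_self_add_diagonal_mul_mul_diagonal (memLp_sub_one_apply hX)
    (fun ω => sub_one_apply_comm (hsymm ω)) (by simp [hdiag]) (fun i j hij => ?_)
    (fun i j hij => ?_) _ s
  · simp only [sub_one_apply_of_ne _ hij, hmean i j hij]
  · simp only [sub_one_apply_of_ne _ hij, hvar i j hij]

end RandomPerturbation

theorem mean_field_risk_correction_general
    {p k d : ℕ}
    (q : Fin p → ℝ) (hq : ∀ i, 0 ≤ q i)
    (M : Matrix (Fin p) (Fin k) ℝ) (P : Matrix (Fin k) (Fin k) ℝ)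
    (Δ : ℝ)
    {Ω : Type*} [MeasurableSpace Ω] (Pr : Measure Ω) [IsProbabilityMeasure Pr]
    (Ξ : Ω → Matrix (Fin p) (Fin p) ℝ)
    (hmeas : ∀ i j, Measurable fun ω => Ξ ω i j)
    (hbdd : ∀ ω i j, |Ξ ω i j| ≤ 1)
    (hdiag : ∀ ω i, Ξ ω i i = 1)
    (hsymm : ∀ ω i j, Ξ ω i j = Ξ ω j i)
    (hmean : ∀ i j, i ≠ j → (∫ ω, Ξ ω i j ∂Pr) = 0)
    (hvar : ∀ i j, i ≠ j → (∫ ω, (Ξ ω i j) ^ 2 ∂Pr) = 1 / ((d : ℝ) - k))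
    (R : Matrix (Fin p) (Fin p) ℝ → ℝ)
    (hR : ∀ Qm : Matrix (Fin p) (Fin p) ℝ,
      R Qm = (P.trace ^ 2 + 2 * (P * P).trace) / (2 * (k : ℝ) ^ 2)
        - (P.trace * Qm.trace + 2 * (M * Mᵀ).trace) / ((p : ℝ) * k)
        + (Qm.trace ^ 2 + 2 * (Qm * Qm).trace) / (2 * (p : ℝ) ^ 2) + Δ / 2)
    (Dq : Matrix (Fin p) (Fin p) ℝ) (hDq : Dq = Matrix.diagonal fun i => Real.sqrt (q i))
    (Qtilde : Ω → Matrix (Fin p) (Fin p) ℝ)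
    (hQtilde : ∀ ω, Qtilde ω = M * P⁻¹ * Mᵀ + Dq * Ξ ω * Dq)
    (Qbar : Matrix (Fin p) (Fin p) ℝ)
    (hQbar : Qbar = M * P⁻¹ * Mᵀ + Matrix.diagonal q) :
    (∫ ω, R (Qtilde ω) ∂Pr)
      = R Qbar + (p : ℝ)⁻¹ ^ 2 *
          (∑ i, ∑ j ∈ Finset.univ.erase i, q i * q j) / ((d : ℝ) - k) := by
  have hΞ : ∀ i j, MemLp (fun ω => Ξ ω i j) 2 Pr := fun i j =>
    .of_bound (hmeas i j).aestronglyMeasurable 1 (.of_forall (hbdd · i j))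
  have hdiag_q : (diagonal fun i => √(q i) ^ 2) = diagonal q := by
    simp only [Real.sq_sqrt (hq _)]
  have htr : ∀ ω, (Qtilde ω).trace = Qbar.trace := fun ω => by
    rw [hQtilde, hQbar, hDq, trace_add_diagonal_mul_mul_diagonal_of_diag_eq_one (hdiag ω), hdiag_q]
  have hRQtilde : ∀ ω, R (Qtilde ω)
      = R Qbar + ((Qtilde ω * Qtilde ω).trace - (Qbar * Qbar).trace) / (p : ℝ) ^ 2 := fun ω => by
    rw [hR, hR, htr]
    ring
  have hint : Integrable (fun ω => (Qtilde ω * Qtilde ω).trace) Pr := by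
    simpa only [hQtilde, hDq] using
      integrable_trace_mul_self_add_diagonal_mul_mul_diagonal_of_diag_eq_one hΞ hsymm _ _
  have hint' : Integrable
      (fun ω => ((Qtilde ω * Qtilde ω).trace - (Qbar * Qbar).trace) / (p : ℝ) ^ 2) Pr :=
    (hint.sub (integrable_const _)).div_const _
  have htr_sq := integral_trace_mul_self_add_diagonal_mul_mul_diagonal_of_diag_eq_one hΞ hsymm
    hdiag hmean hvar (M * P⁻¹ * Mᵀ) fun i => √(q i)
  simp only [← hDq, ← hQtilde, ← hQbar, Real.sq_sqrt (hq _)] at htr_sq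
  simp only [hRQtilde]
  rw [integral_add (integrable_const _) hint', integral_div, integral_sub hint (integrable_const _),
    htr_sq]
  simp only [integral_const, probReal_univ, one_smul]
  ring

/-- For the square activation, with the random overlap matrix
`Q̃ = M P⁻¹ Mᵀ + D_{√q} Ξ D_{√q}`, where `Ξ` has unit diagonal and off-diagonal entries with
mean `0` and second moment `1/(d−k)` (the moments of `⟨g, g'⟩` for independent uniform vectors
on `S^{d−k−1}`), the averaged risk satisfies
`E_Ξ[R(Q̃)] = R(Q̄) + (1/p²)(Σ_{i≠j} q_i q_j)/(d−k)`, where `Q̄` replaces `Ξ` by the identity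
and `R(Q) = (Tr(P)²+2Tr(P²))/(2k²) − (Tr(P)Tr(Q)+2Tr(MMᵀ))/(pk) + (Tr(Q)²+2Tr(Q²))/(2p²) + Δ/2`. -/
theorem mean_field_risk_correction
    {p k d : ℕ} (hp : 2 ≤ p) (hk : 0 < k) (hdk : k + 2 ≤ d)
    (q : Fin p → ℝ) (hq : ∀ i, 0 ≤ q i)
    (M : Matrix (Fin p) (Fin k) ℝ) (P : Matrix (Fin k) (Fin k) ℝ) (hP : IsUnit P.det)
    (Δ : ℝ)
    {Ω : Type*} [MeasurableSpace Ω] (Pr : Measure Ω) [IsProbabilityMeasure Pr]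
    (Ξ : Ω → Matrix (Fin p) (Fin p) ℝ)
    (hmeas : ∀ i j, Measurable fun ω => Ξ ω i j)
    (hbdd : ∀ ω i j, |Ξ ω i j| ≤ 1)
    (hdiag : ∀ ω i, Ξ ω i i = 1)
    (hsymm : ∀ ω i j, Ξ ω i j = Ξ ω j i)
    (hmean : ∀ i j, i ≠ j → (∫ ω, Ξ ω i j ∂Pr) = 0)
    (hvar : ∀ i j, i ≠ j → (∫ ω, (Ξ ω i j) ^ 2 ∂Pr) = 1 / ((d : ℝ) - k))
    (R : Matrix (Fin p) (Fin p) ℝ → ℝ)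
    (hR : ∀ Qm : Matrix (Fin p) (Fin p) ℝ,
      R Qm = (P.trace ^ 2 + 2 * (P * P).trace) / (2 * (k : ℝ) ^ 2)
        - (P.trace * Qm.trace + 2 * (M * Mᵀ).trace) / ((p : ℝ) * k)
        + (Qm.trace ^ 2 + 2 * (Qm * Qm).trace) / (2 * (p : ℝ) ^ 2) + Δ / 2)
    (Dq : Matrix (Fin p) (Fin p) ℝ) (hDq : Dq = Matrix.diagonal fun i => Real.sqrt (q i))
    (Qtilde : Ω → Matrix (Fin p) (Fin p) ℝ)
    (hQtilde : ∀ ω, Qtilde ω = M * P⁻¹ * Mᵀ + Dq * Ξ ω * Dq)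
    (Qbar : Matrix (Fin p) (Fin p) ℝ)
    (hQbar : Qbar = M * P⁻¹ * Mᵀ + Matrix.diagonal q) :
    (∫ ω, R (Qtilde ω) ∂Pr)
      = R Qbar + (p : ℝ)⁻¹ ^ 2 *
          (∑ i, ∑ j ∈ Finset.univ.erase i, q i * q j) / ((d : ℝ) - k) :=
  mean_field_risk_correction_general q hq M P Δ Pr Ξ hmeas hbdd hdiag hsymm hmean hvar R hR Dq hDq
    Qtilde hQtilde Qbar hQbar
end
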